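/- Let p be a prime, n a positive integer, and let F(X) = ∑_{0<i<j<n} c_{ij} X^{p^i+p^j+1} be a cubic function in F_{p^n}[X] (c_{ij} ∈ F_{p^n}). For a, b ∈ F_{p^n}, define the linearized polynomial L_{a,b}(X) = ∑_{0<i<j<n} c_{ij} ( X·(a^{p^i} b^{p^j} + a^{p^j} b^{p^i}) + X^{p^i}·(b·a^{p^j} + a·b^{p^j}) + X^{p^j}·(b·a^{p^i} + a·b^{p^i}) ) and δ_{a,b} = ∑_{0<i<j<n} c_{ij} ( (a+b)(a^{p^i} b^{p^j} + a^{p^j} b^{p^i}) + a·b^{p^i+p^j} + b·a^{p^i+p^j} ). Then: ∇_F(a,b) = p^n if ab = 0; ∇_F(a,b) = #{X ∈ F_{p^n} : L_{a,b}(X) = 0} = p^{dim_{F_p} ker L_{a,b}} if δ_{a,b} lies in the image of the map X ↦ L_{a,b}(X) on F_{p^n}; and ∇_F(a,b) = 0 if δ_{a,b} does not lie in that image. -/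

import Mathlib

open Finset

/-- Second-order zero differential spectrum of `f` at `(a, b)`:
the number of `X` with `f(X+a+b) - f(X+b) - f(X+a) + f(X) = 0`. -/
def sozdSpec {K : Type*} [Field K] [Fintype K] [DecidableEq K] (f : K → K) (a b : K) : ℕ :=
  (Finset.univ.filter fun X : K => f (X + a + b) - f (X + b) - f (X + a) + f X = 0).card

/-- DDT entry of `f` at `(a, b)`: the number of `X` with `f(X+a) - f(X) = b`. -/
def ddtEntry {K : Type*} [Field K] [Fintype K] [DecidableEq K] (f : K → K) (a b : K) : ℕ :=
  (Finset.univ.filter fun X : K => f (X + a) - f X = b).card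

/-- Differential uniformity of `f`: `max {Δ_f(a,b) : a ≠ 0, b}`. -/
def diffUnif {K : Type*} [Field K] [Fintype K] [DecidableEq K] (f : K → K) : ℕ :=
  Finset.sup ((Finset.univ.filter fun a : K => a ≠ 0) ×ˢ Finset.univ)
    fun ab => ddtEntry f ab.1 ab.2

/-- Second-order zero differential uniformity (odd characteristic):
`max {∇_f(a,b) : a ≠ 0, b ≠ 0}`. -/
def sozdUnifOdd {K : Type*} [Field K] [Fintype K] [DecidableEq K] (f : K → K) : ℕ :=
  Finset.sup ((Finset.univ.filter fun a : K => a ≠ 0) ×ˢ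
      (Finset.univ.filter fun b : K => b ≠ 0))
    fun ab => sozdSpec f ab.1 ab.2

/-! Since `X ↦ X ^ p ^ k` is additive, the second difference of `X ^ (p ^ i + p ^ j + 1)` in
directions `a, b` is affine in `X`, with linear part `L_{a,b}` and constant part `δ_{a,b}`.
Hence `∇_F(a,b)` counts the fibre of the additive map `L_{a,b}` over `-δ_{a,b}`, which is
empty or a coset of the kernel. When `a * b = 0` the second difference vanishes identically. -/

def secondDiff {G A : Type*} [Add G] [AddCommGroup A] (f : G → A) (a b X : G) : A :=
  f (X + a + b) - f (X + b) - f (X + a) + f X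

section SecondDiff

variable {G A : Type*} [AddCommGroup A]

theorem secondDiff_zero_left [AddZeroClass G] (f : G → A) (b X : G) :
    secondDiff f 0 b X = 0 := by
  simp [secondDiff]

theorem secondDiff_zero_right [AddZeroClass G] (f : G → A) (a X : G) :
    secondDiff f a 0 X = 0 := by
  simp [secondDiff]

theorem secondDiff_finset_sum [Add G] {ι : Type*} (s : Finset ι) (g : ι → G → A) (a b X : G) :
    secondDiff (fun Y => ∑ i ∈ s, g i Y) a b X = ∑ i ∈ s, secondDiff (g i) a b X := by
  simp only [secondDiff, sum_sub_distrib, sum_add_distrib]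

theorem secondDiff_const_mul {R : Type*} [CommRing R] (c : R) (g : R → R) (a b X : R) :
    secondDiff (fun Y => c * g Y) a b X = c * secondDiff g a b X := by
  simp only [secondDiff]
  ring

theorem secondDiff_pow_expChar_pow_add_pow_add_one {R : Type*} [CommRing R] {p : ℕ}
    [ExpChar R p] (i j : ℕ) (a b X : R) :
    secondDiff (fun Y => Y ^ (p ^ i + p ^ j + 1)) a b X =
      X * (a ^ p ^ i * b ^ p ^ j + a ^ p ^ j * b ^ p ^ i)
        + X ^ p ^ i * (b * a ^ p ^ j + a * b ^ p ^ j)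
        + X ^ p ^ j * (b * a ^ p ^ i + a * b ^ p ^ i)
        + ((a + b) * (a ^ p ^ i * b ^ p ^ j + a ^ p ^ j * b ^ p ^ i)
          + a * b ^ (p ^ i + p ^ j) + b * a ^ (p ^ i + p ^ j)) := by
  simp only [secondDiff, pow_add, pow_one, add_pow_expChar_pow]
  ring

end SecondDiff

section Spectrum

variable {K : Type*} [Field K] [Fintype K] [DecidableEq K]

theorem sozdSpec_eq_card_filter_secondDiff (f : K → K) (a b : K) :
    sozdSpec f a b = #{X | secondDiff f a b X = 0} :=
  rfl

theorem sozdSpec_of_mul_eq_zero (f : K → K) {a b : K} (hab : a * b = 0) :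
    sozdSpec f a b = Fintype.card K := by
  rw [sozdSpec_eq_card_filter_secondDiff, ← card_univ]
  congr 1
  refine filter_true_of_mem fun X _ => ?_
  rcases mul_eq_zero.1 hab with rfl | rfl
  exacts [secondDiff_zero_left f b X, secondDiff_zero_right f a X]

theorem sozdSpec_eq_card_fiber_of_secondDiff_eq {f : K → K} {a b : K} (φ : K → K) (δ : K)
    (h : ∀ X, secondDiff f a b X = φ X + δ) :
    sozdSpec f a b = #{X | φ X = -δ} := by
  simp only [sozdSpec_eq_card_filter_secondDiff, h, add_eq_zero_iff_eq_neg]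

end Spectrum

theorem card_filter_apply_eq_zero_eq_pow_finrank {p : ℕ} [Fact p.Prime] {V W : Type*}
    [AddCommGroup V] [Module (ZMod p) V] [Fintype V] [AddCommGroup W] [Module (ZMod p) W]
    [DecidableEq W] (ℓ : V →ₗ[ZMod p] W) :
    #{x | ℓ x = 0} = p ^ Module.finrank (ZMod p) (LinearMap.ker ℓ) := by
  calc #{x | ℓ x = 0} = Nat.card (LinearMap.ker ℓ) := by
        rw [← Fintype.card_subtype, ← Nat.card_eq_fintype_card]
        rfl
    _ = p ^ Module.finrank (ZMod p) (LinearMap.ker ℓ) := by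
        rw [Module.natCard_eq_pow_finrank (K := ZMod p), Nat.card_zmod]

theorem sozd_spectrum_cubic_general
    {p n : ℕ} (hp : p.Prime)
    {K : Type*} [Field K] [Fintype K] [DecidableEq K] [CharP K p]
    [Algebra (ZMod p) K]
    (hcard : Fintype.card K = p ^ n)
    (c : ℕ → ℕ → K) (a b : K)
    (f : K → K)
    (hf : ∀ X : K, f X = ∑ j ∈ Finset.range n, ∑ i ∈ Finset.Ioo 0 j,
        c i j * X ^ (p ^ i + p ^ j + 1))
    (L : K → K)
    (hL : ∀ X : K, L X = ∑ j ∈ Finset.range n, ∑ i ∈ Finset.Ioo 0 j,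
        c i j * (X * (a ^ p ^ i * b ^ p ^ j + a ^ p ^ j * b ^ p ^ i)
          + X ^ p ^ i * (b * a ^ p ^ j + a * b ^ p ^ j)
          + X ^ p ^ j * (b * a ^ p ^ i + a * b ^ p ^ i)))
    (δ : K)
    (hδ : δ = ∑ j ∈ Finset.range n, ∑ i ∈ Finset.Ioo 0 j,
        c i j * ((a + b) * (a ^ p ^ i * b ^ p ^ j + a ^ p ^ j * b ^ p ^ i)
          + a * b ^ (p ^ i + p ^ j) + b * a ^ (p ^ i + p ^ j))) :
    (a * b = 0 → sozdSpec f a b = p ^ n) ∧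
    ((∃ X : K, L X = δ) →
      sozdSpec f a b = (Finset.univ.filter fun X : K => L X = 0).card ∧
      ∀ ℓ : K →ₗ[ZMod p] K, (∀ X : K, ℓ X = L X) →
        sozdSpec f a b = p ^ Module.finrank (ZMod p) (LinearMap.ker ℓ)) ∧
    ((¬ ∃ X : K, L X = δ) → sozdSpec f a b = 0) := by
  have : Fact p.Prime := ⟨hp⟩
  have hsecond : ∀ X, secondDiff f a b X = L X + δ := by
    intro X
    simp only [funext hf, secondDiff_finset_sum, secondDiff_const_mul,
      secondDiff_pow_expChar_pow_add_pow_add_one, hL, hδ, ← sum_add_distrib, mul_add]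
  have hadd : ∀ X Y, L (X + Y) = L X + L Y := by
    intro X Y
    simp only [hL, ← sum_add_distrib, add_pow_char_pow]
    exact sum_congr rfl fun _ _ => sum_congr rfl fun _ _ => by ring
  let Lₕ : K →+ K := AddMonoidHom.mk' L hadd
  have hneg : ∀ X, L (-X) = -L X := map_neg Lₕ
  have hspec := sozdSpec_eq_card_fiber_of_secondDiff_eq L δ hsecond
  refine ⟨fun hab => (sozdSpec_of_mul_eq_zero f hab).trans hcard, ?_, fun hδL => ?_⟩
  · rintro ⟨X₀, hX₀⟩
    have hker : sozdSpec f a b = #{X | L X = 0} :=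
      hspec.trans <| AddMonoidHom.card_fiber_eq_of_mem_range Lₕ
        ⟨-X₀, by simp [Lₕ, hneg, hX₀]⟩ ⟨0, map_zero Lₕ⟩
    refine ⟨hker, fun ℓ hℓ => ?_⟩
    obtain rfl : ⇑ℓ = L := funext hℓ
    exact hker.trans (card_filter_apply_eq_zero_eq_pow_finrank ℓ)
  · rw [hspec, card_eq_zero, filter_eq_empty_iff]
    exact fun X _ hX => hδL ⟨-X, by rw [hneg, hX, neg_neg]⟩

/-- Second-order zero differential spectrum of a cubic function
`F(X) = ∑_{0<i<j<n} c_{ij} X^{p^i+p^j+1}` over `F_{p^n}`. -/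
theorem sozd_spectrum_cubic
    {p n : ℕ} (hp : p.Prime) (hn : 0 < n)
    {K : Type*} [Field K] [Fintype K] [DecidableEq K] [CharP K p]
    [Algebra (ZMod p) K]
    (hcard : Fintype.card K = p ^ n)
    (c : ℕ → ℕ → K) (a b : K)
    (f : K → K)
    (hf : ∀ X : K, f X = ∑ j ∈ Finset.range n, ∑ i ∈ Finset.Ioo 0 j,
        c i j * X ^ (p ^ i + p ^ j + 1))
    (L : K → K)
    (hL : ∀ X : K, L X = ∑ j ∈ Finset.range n, ∑ i ∈ Finset.Ioo 0 j,
        c i j * (X * (a ^ p ^ i * b ^ p ^ j + a ^ p ^ j * b ^ p ^ i)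
          + X ^ p ^ i * (b * a ^ p ^ j + a * b ^ p ^ j)
          + X ^ p ^ j * (b * a ^ p ^ i + a * b ^ p ^ i)))
    (δ : K)
    (hδ : δ = ∑ j ∈ Finset.range n, ∑ i ∈ Finset.Ioo 0 j,
        c i j * ((a + b) * (a ^ p ^ i * b ^ p ^ j + a ^ p ^ j * b ^ p ^ i)
          + a * b ^ (p ^ i + p ^ j) + b * a ^ (p ^ i + p ^ j))) :
    (a * b = 0 → sozdSpec f a b = p ^ n) ∧
    ((∃ X : K, L X = δ) →
      sozdSpec f a b = (Finset.univ.filter fun X : K => L X = 0).card ∧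
      ∀ ℓ : K →ₗ[ZMod p] K, (∀ X : K, ℓ X = L X) →
        sozdSpec f a b = p ^ Module.finrank (ZMod p) (LinearMap.ker ℓ)) ∧
    ((¬ ∃ X : K, L X = δ) → sozdSpec f a b = 0) :=
  sozd_spectrum_cubic_general hp hcard c a b f hf L hL δ hδ
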